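/- Let M be a d×d integer matrix of infinite multiplicative order whose determinant is relatively prime to n ≥ 2. In the group of bijections of ℤ_n^d, the subgroup generated by the translations α_1, …, α_d (by standard basis vectors) together with μ : u ↦ Mu is isomorphic to the ascending HNN extension G_M = ⟨a_1,…,a_d, t | [a_i,a_j] = 1, t a_i t^{-1} = a_1^{m_{1,i}} ⋯ a_d^{m_{d,i}}⟩; in particular the subgroup ⟨α_1,…,α_d⟩ is free abelian of rank d and intersects ⟨μ⟩ trivially. -/

import Mathlib

/-- The ring of `n`-adic integers `ℤ_n`: compatible sequences in the inverse
limit of the rings `ℤ/n^kℤ`. -/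
def nAdicSubring (n : ℕ) : Subring (∀ k : ℕ, ZMod (n ^ k)) where
  carrier := { f | ∀ k : ℕ,
    ZMod.castHom (pow_dvd_pow n (Nat.le_succ k)) (ZMod (n ^ k)) (f (k + 1)) = f k }
  zero_mem' := by intro k; simp only [Pi.zero_apply, map_zero]
  one_mem' := by intro k; simp only [Pi.one_apply, map_one]
  add_mem' := by intro f g hf hg k; simp only [Pi.add_apply, map_add, hf k, hg k]
  neg_mem' := by intro f hf k; simp only [Pi.neg_apply, map_neg, hf k]
  mul_mem' := by intro f g hf hg k; simp only [Pi.mul_apply, map_mul, hf k, hg k]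

/-- The `n`-adic integers as a type. -/
def nAdicInt (n : ℕ) : Type := nAdicSubring n

noncomputable instance (n : ℕ) : CommRing (nAdicInt n) :=
  inferInstanceAs (CommRing (nAdicSubring n))

section Generic
variable {G : Type*} [Group G] {d : ℕ}

lemma noncommProd_univ_eq_ofFn (f : Fin d → G)
    (comm : ((Finset.univ : Finset (Fin d)) : Set (Fin d)).Pairwise (fun a b => Commute (f a) (f b))) :
    Finset.univ.noncommProd f comm = (List.ofFn f).prod := by
  have h : (Finset.univ.val.map f) = ((List.ofFn f : List G) : Multiset G) := by
    simp [Fin.univ_val_map]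
  rw [Finset.noncommProd]
  rw [← Multiset.noncommProd_coe (List.ofFn f) (by rw [← h]; exact Finset.noncommProd_lemma _ f comm)]
  congr 1

noncomputable def azHom (A : Fin d → G) (hcomm : ∀ i j, Commute (A i) (A j)) :
    ((Fin d) → Multiplicative ℤ) →* G :=
  MonoidHom.noncommPiCoprod (fun i => zpowersHom G (A i))
    (@id (Pairwise fun i j => ∀ x y : Multiplicative ℤ,
        Commute (zpowersHom G (A i) x) (zpowersHom G (A j) y)) fun i j _ x y => by
        simpa using Commute.zpow_zpow (hcomm i j) (Multiplicative.toAdd x) (Multiplicative.toAdd y))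

variable (A : Fin d → G) (hcomm : ∀ i j, Commute (A i) (A j))

noncomputable def azZ (v : Fin d → ℤ) : G :=
  azHom A hcomm (fun i => Multiplicative.ofAdd (v i))

lemma azZ_add (v w : Fin d → ℤ) : azZ A hcomm (v + w) = azZ A hcomm v * azZ A hcomm w := by
  rw [azZ, azZ, azZ, ← map_mul]
  rfl

lemma azZ_zero : azZ A hcomm 0 = 1 :=
  map_one (azHom A hcomm)

lemma azZ_neg (v : Fin d → ℤ) : azZ A hcomm (-v) = (azZ A hcomm v)⁻¹ := by
  rw [azZ, azZ, ← map_inv]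
  rfl

lemma azZ_single (i : Fin d) (k : ℤ) : azZ A hcomm (Pi.single i k) = A i ^ k := by
  rw [azZ]
  have h : (fun j => Multiplicative.ofAdd ((Pi.single i k : Fin d → ℤ) j)) =
      Pi.mulSingle i (Multiplicative.ofAdd k) := by
    funext j
    by_cases hj : j = i
    · subst hj; simp
    · simp [Pi.single_eq_of_ne hj, Pi.mulSingle_eq_of_ne hj]
  rw [h, azHom, MonoidHom.noncommPiCoprod_mulSingle]
  simp

lemma azZ_ofFn (v : Fin d → ℤ) : azZ A hcomm v = (List.ofFn fun j => A j ^ v j).prod := by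
  rw [azZ, azHom]
  unfold MonoidHom.noncommPiCoprod
  simp only [MonoidHom.coe_mk, OneHom.coe_mk]
  refine (noncommProd_univ_eq_ofFn _ _).trans ?_
  simp


/-- `v ↦ M.mulVec v` as a hom on `Fin d → Multiplicative ℤ`. -/
def mulVecHom (M : Matrix (Fin d) (Fin d) ℤ) :
    (Fin d → Multiplicative ℤ) →* (Fin d → Multiplicative ℤ) :=
  MonoidHom.mk' (fun x => fun i => Multiplicative.ofAdd
      (M.mulVec (fun j => Multiplicative.toAdd (x j)) i))
    (by
      intro x y
      funext i
      show Multiplicative.ofAdd (M.mulVec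
          ((fun j => Multiplicative.toAdd (x j)) + fun j => Multiplicative.toAdd (y j)) i) = _
      rw [Matrix.mulVec_add]
      rfl)

variable (M : Matrix (Fin d) (Fin d) ℤ) (T : G)
variable (hrel : ∀ i, T * A i * T⁻¹ = azZ A hcomm (fun j => M j i))

include hrel in
lemma conj_azZ (v : Fin d → ℤ) :
    T * azZ A hcomm v * T⁻¹ = azZ A hcomm (M.mulVec v) := by
  have key : (MulAut.conj T).toMonoidHom.comp (azHom A hcomm) =
      (azHom A hcomm).comp (mulVecHom M) := by
    apply MonoidHom.pi_ext
    intro i x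
    set k : ℤ := Multiplicative.toAdd x with hk
    have hx : x = Multiplicative.ofAdd k := rfl
    have h1 : (azHom A hcomm) (Pi.mulSingle i x) = A i ^ k := by
      rw [hx]
      have := azZ_single A hcomm i k
      rw [azZ] at this
      rw [← this]
      congr 1
    have h2 : mulVecHom M (Pi.mulSingle i x) =
        fun j => Multiplicative.ofAdd ((fun j => M j i * k) j) := by
      funext j
      have : (fun j' => Multiplicative.toAdd ((Pi.mulSingle i x : Fin d → Multiplicative ℤ) j')) =
          (Pi.single i k : Fin d → ℤ) := by
        funext j'
        by_cases hj : j' = i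
        · subst hj; simp [hx]
        · simp [Pi.single_eq_of_ne hj, Pi.mulSingle_eq_of_ne hj]
      simp only [mulVecHom, MonoidHom.mk'_apply, this, Matrix.mulVec_single]
      rfl
    calc (MulAut.conj T) ((azHom A hcomm) (Pi.mulSingle i x))
        = (MulAut.conj T) (A i ^ k) := by rw [h1]
      _ = ((MulAut.conj T) (A i)) ^ k := map_zpow _ _ _
      _ = (T * A i * T⁻¹) ^ k := by rw [MulAut.conj_apply]
      _ = (azZ A hcomm (fun j => M j i)) ^ k := by rw [hrel i]
      _ = azZ A hcomm (fun j => M j i * k) := by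
          rw [azZ, azZ, ← map_zpow]
          congr 1
          funext j
          simp [mul_comm, ofAdd_zsmul]
      _ = (azHom A hcomm) ((mulVecHom M) (Pi.mulSingle i x)) := by rw [h2, azZ]
  have := DFunLike.congr_fun key (fun i => Multiplicative.ofAdd (v i))
  simp only [MonoidHom.comp_apply] at this
  calc T * azZ A hcomm v * T⁻¹ = (MulAut.conj T) (azHom A hcomm fun i => Multiplicative.ofAdd (v i)) := rfl
    _ = (azHom A hcomm) ((mulVecHom M) fun i => Multiplicative.ofAdd (v i)) := this
    _ = azZ A hcomm (M.mulVec v) := by rw [azZ]; congr 1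

include hrel in
lemma tpow_azZ (k : ℕ) (v : Fin d → ℤ) :
    T ^ k * azZ A hcomm v = azZ A hcomm ((M ^ k).mulVec v) * T ^ k := by
  induction k with
  | zero => simp [Matrix.one_mulVec]
  | succ k ih =>
    have step := conj_azZ A hcomm M T hrel ((M ^ k).mulVec v)
    have step' : T * azZ A hcomm ((M ^ k).mulVec v) =
        azZ A hcomm (M.mulVec ((M ^ k).mulVec v)) * T := by
      rw [← step]; group
    calc T ^ (k+1) * azZ A hcomm v = T * (T ^ k * azZ A hcomm v) := by
          rw [pow_succ']; group
      _ = T * (azZ A hcomm ((M ^ k).mulVec v) * T ^ k) := by rw [ih]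
      _ = (T * azZ A hcomm ((M ^ k).mulVec v)) * T ^ k := by group
      _ = (azZ A hcomm (M.mulVec ((M ^ k).mulVec v)) * T) * T ^ k := by rw [step']
      _ = azZ A hcomm ((M ^ (k+1)).mulVec v) * T ^ (k+1) := by
          rw [Matrix.mulVec_mulVec, ← pow_succ']
          group

include hrel in
lemma azZ_tpow_inv (k : ℕ) (v : Fin d → ℤ) :
    azZ A hcomm v * (T ^ k)⁻¹ = (T ^ k)⁻¹ * azZ A hcomm ((M ^ k).mulVec v) := by
  have := tpow_azZ A hcomm M T hrel k v
  calc azZ A hcomm v * (T ^ k)⁻¹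
      = (T ^ k)⁻¹ * (T ^ k * azZ A hcomm v) * (T ^ k)⁻¹ := by group
    _ = (T ^ k)⁻¹ * (azZ A hcomm ((M ^ k).mulVec v) * T ^ k) * (T ^ k)⁻¹ := by rw [this]
    _ = (T ^ k)⁻¹ * azZ A hcomm ((M ^ k).mulVec v) := by group

include hrel in
/-- The normal-form subgroup: elements `(T^p)⁻¹ * a_v * T^q`. -/
noncomputable def NF : Subgroup G where
  carrier := {g | ∃ (p q : ℕ) (v : Fin d → ℤ), g = (T ^ p)⁻¹ * azZ A hcomm v * T ^ q}
  one_mem' := ⟨0, 0, 0, by simp [azZ_zero]⟩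
  inv_mem' := by
    rintro x ⟨p, q, v, rfl⟩
    refine ⟨q, p, -v, ?_⟩
    rw [azZ_neg]
    group
  mul_mem' := by
    rintro x y ⟨p, q, v, rfl⟩ ⟨p', q', w, rfl⟩
    rcases le_or_gt p' q with h | h
    · obtain ⟨e, rfl⟩ : ∃ e, q = p' + e := ⟨q - p', by omega⟩
      refine ⟨p, e + q', v + (M ^ e).mulVec w, ?_⟩
      have key : T ^ e * azZ A hcomm w = azZ A hcomm ((M ^ e).mulVec w) * T ^ e :=
        tpow_azZ A hcomm M T hrel e w
      calc (T ^ p)⁻¹ * azZ A hcomm v * T ^ (p' + e) * ((T ^ p')⁻¹ * azZ A hcomm w * T ^ q')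
          = (T ^ p)⁻¹ * azZ A hcomm v * (T ^ e * azZ A hcomm w) * T ^ q' := by
            rw [pow_add]; group
        _ = (T ^ p)⁻¹ * azZ A hcomm v * (azZ A hcomm ((M ^ e).mulVec w) * T ^ e) * T ^ q' := by
            rw [key]
        _ = (T ^ p)⁻¹ * (azZ A hcomm v * azZ A hcomm ((M ^ e).mulVec w)) * (T ^ e * T ^ q') := by
            group
        _ = (T ^ p)⁻¹ * azZ A hcomm (v + (M ^ e).mulVec w) * T ^ (e + q') := by
            rw [azZ_add, pow_add]
    · obtain ⟨e, he, rfl⟩ : ∃ e, 0 < e ∧ p' = q + e := ⟨p' - q, by omega, by omega⟩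
      refine ⟨p + e, q', (M ^ e).mulVec v + w, ?_⟩
      have key : azZ A hcomm v * (T ^ e)⁻¹ = (T ^ e)⁻¹ * azZ A hcomm ((M ^ e).mulVec v) :=
        azZ_tpow_inv A hcomm M T hrel e v
      calc (T ^ p)⁻¹ * azZ A hcomm v * T ^ q * ((T ^ (q + e))⁻¹ * azZ A hcomm w * T ^ q')
          = (T ^ p)⁻¹ * (azZ A hcomm v * (T ^ e)⁻¹) * azZ A hcomm w * T ^ q' := by
            rw [pow_add]; group
        _ = (T ^ p)⁻¹ * ((T ^ e)⁻¹ * azZ A hcomm ((M ^ e).mulVec v)) * azZ A hcomm w * T ^ q' := by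
            rw [key]
        _ = (T ^ (p + e))⁻¹ * (azZ A hcomm ((M ^ e).mulVec v) * azZ A hcomm w) * T ^ q' := by
            rw [pow_add]; group
        _ = (T ^ (p + e))⁻¹ * azZ A hcomm ((M ^ e).mulVec v + w) * T ^ q' := by
            rw [azZ_add]

end Generic




section NAdic


variable (n : ℕ)

/-- Projection to the `k`-th component, as a ring hom. -/
noncomputable def nAdicProj (k : ℕ) : nAdicInt n →+* ZMod (n ^ k) :=
  (Pi.evalRingHom (fun k => ZMod (n ^ k)) k).comp (nAdicSubring n).subtype

lemma nAdicInt_intCast_injective (hn : 2 ≤ n) :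
    Function.Injective (Int.cast : ℤ → nAdicInt n) := by
  have key : ∀ m : ℤ, (m : nAdicInt n) = 0 → m = 0 := by
    intro m hm
    set k := m.natAbs with hk
    haveI : NeZero (n ^ k) := ⟨pow_ne_zero _ (by omega)⟩
    have h1 : ((m : ℤ) : ZMod (n ^ k)) = 0 := by
      have := congrArg (nAdicProj n k) hm
      rwa [map_intCast, map_zero] at this
    have h2 : ((n ^ k : ℕ) : ℤ) ∣ m := (ZMod.intCast_zmod_eq_zero_iff_dvd m (n ^ k)).mp h1
    refine Int.eq_zero_of_abs_lt_dvd h2 ?_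
    rw [Int.abs_eq_natAbs, ← hk]
    have : k < n ^ k := lt_of_lt_of_le (Nat.lt_two_pow_self (n := k)) (Nat.pow_le_pow_left hn k)
    exact_mod_cast this
  intro a b hab
  have : ((a - b : ℤ) : nAdicInt n) = 0 := by push_cast; rw [hab]; ring
  have := key _ this
  omega

end NAdic

section AddRight
variable {β : Type*} [AddCommGroup β]

lemma addRight_mul (w w' : β) :
    Equiv.addRight (w + w') = Equiv.addRight w * Equiv.addRight w' := by
  ext u
  simp [Equiv.Perm.mul_apply, add_assoc, add_comm, add_left_comm]

/-- Translations as an additive hom into `Additive (Perm β)`. -/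
def addRightHom : β →+ Additive (Equiv.Perm β) :=
  AddMonoidHom.mk' (fun w => Additive.ofMul (Equiv.addRight w))
    (fun w w' => congrArg Additive.ofMul (addRight_mul w w'))

lemma addRight_zpow (w : β) (k : ℤ) :
    (Equiv.addRight w) ^ k = Equiv.addRight (k • w) := by
  apply Additive.ofMul.injective
  calc Additive.ofMul ((Equiv.addRight w) ^ k) = k • Additive.ofMul (Equiv.addRight w) :=
        ofMul_zpow _ _
    _ = k • addRightHom w := rfl
    _ = addRightHom (k • w) := (map_zsmul addRightHom k w).symm
    _ = Additive.ofMul (Equiv.addRight (k • w)) := rfl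

end AddRight

section PermSide

variable {d n : ℕ}
variable (M : Matrix (Fin d) (Fin d) ℤ)
variable (α : Fin d → Equiv.Perm (Fin d → nAdicInt n))
variable (hα : ∀ i : Fin d, ⇑(α i) = fun u => u + Pi.single i (1 : nAdicInt n))
variable (μ : Equiv.Perm (Fin d → nAdicInt n))
variable (hμ : ⇑μ = fun u => (M.map (fun x : ℤ => (x : nAdicInt n))).mulVec u)

/-- the integer vector `v` cast into `ℤ_n^d`. -/
noncomputable def castv (v : Fin d → ℤ) : Fin d → nAdicInt n := fun i => ((v i : ℤ) : nAdicInt n)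

include hα in
lemma alpha_eq (i : Fin d) : α i = Equiv.addRight (Pi.single i (1 : nAdicInt n)) := by
  ext u
  simp [hα]

include hα in
lemma hcommα : ∀ i j, Commute (α i) (α j) := by
  intro i j
  unfold Commute SemiconjBy
  ext u
  simp [Equiv.Perm.mul_apply, hα, add_assoc, add_comm, add_left_comm]

lemma castv_single (i : Fin d) (k : ℤ) :
    (castv (Pi.single i k) : Fin d → nAdicInt n) = k • Pi.single i (1 : nAdicInt n) := by
  funext j
  by_cases hj : j = i
  · subst hj
    simp [castv, zsmul_one]
  · simp [castv, Pi.single_eq_of_ne hj]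

lemma castv_add (v w : Fin d → ℤ) :
    (castv (v + w) : Fin d → nAdicInt n) = castv v + castv w := by
  funext j
  simp [castv]

include hα in
lemma azPerm (v : Fin d → ℤ) :
    azZ α (hcommα α hα) v = Equiv.addRight (castv v) := by
  have key : azHom α (hcommα α hα) = MonoidHom.mk'
      (fun x : Fin d → Multiplicative ℤ =>
        Equiv.addRight (castv (fun i => Multiplicative.toAdd (x i)) : Fin d → nAdicInt n))
      (by
        intro x y
        show Equiv.addRight (castv fun i => Multiplicative.toAdd ((x * y) i)) =
          Equiv.addRight (castv fun i => Multiplicative.toAdd (x i)) *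
            Equiv.addRight (castv fun i => Multiplicative.toAdd (y i))
        rw [show (fun i => Multiplicative.toAdd ((x * y) i)) =
          (fun i => Multiplicative.toAdd (x i)) + (fun i => Multiplicative.toAdd (y i)) from rfl]
        rw [castv_add, addRight_mul]) := by
    apply MonoidHom.pi_ext
    intro i x
    set k : ℤ := Multiplicative.toAdd x with hk
    have h1 : (azHom α (hcommα α hα)) (Pi.mulSingle i x) = α i ^ k := by
      have := azZ_single α (hcommα α hα) i k
      rw [azZ] at this
      rw [← this]
      congr 1
    rw [h1]
    have h2 : (fun i' => Multiplicative.toAdd ((Pi.mulSingle i x : Fin d → Multiplicative ℤ) i')) =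
        (Pi.single i k : Fin d → ℤ) := by
      funext j
      by_cases hj : j = i
      · subst hj; simp [hk]
      · simp [Pi.single_eq_of_ne hj, Pi.mulSingle_eq_of_ne hj]
    rw [MonoidHom.mk'_apply, h2, castv_single, ← addRight_zpow, ← alpha_eq α hα]
  rw [azZ, key, MonoidHom.mk'_apply]
  congr 1

include hα hμ in
lemma hrelPerm (i : Fin d) :
    μ * α i * μ⁻¹ = azZ α (hcommα α hα) (fun j => M j i) := by
  rw [azPerm α hα]
  refine Equiv.ext fun u => ?_
  have hinv : (M.map (fun x : ℤ => (x : nAdicInt n))).mulVec (μ⁻¹ u) = u := by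
    have := μ.apply_symm_apply u
    rwa [hμ] at this
  calc (μ * α i * μ⁻¹) u = μ (α i (μ⁻¹ u)) := rfl
    _ = (M.map (fun x : ℤ => (x : nAdicInt n))).mulVec (μ⁻¹ u + Pi.single i 1) := by
        simp only [hμ, hα]
    _ = u + (M.map (fun x : ℤ => (x : nAdicInt n))).mulVec (Pi.single i 1) := by
        rw [Matrix.mulVec_add, hinv]
    _ = u + castv (fun j => M j i) := by
        congr 1
        rw [Matrix.mulVec_single]
        funext j
        simp [castv, Matrix.map_apply]
    _ = Equiv.addRight (castv fun j => M j i) u := rfl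

include hμ in
lemma mu_pow (k : ℕ) :
    ⇑(μ ^ k) = ((M.map (fun x : ℤ => (x : nAdicInt n))) ^ k).mulVec := by
  induction k with
  | zero => funext u; simp [Matrix.one_mulVec]
  | succ k ih =>
    funext u
    rw [pow_succ', Equiv.Perm.mul_apply, ih, hμ, pow_succ', ← Matrix.mulVec_mulVec]

include hμ in
lemma mu_pow_zero (k : ℕ) : (μ ^ k) 0 = 0 := by
  rw [mu_pow M μ hμ k, Matrix.mulVec_zero]

end PermSide

open scoped commutatorElement

/-- The relators of the ascending HNN extension
`G_M = ⟨a_1,…,a_d, t ∣ [a_i,a_j] = 1, t a_i t⁻¹ = a_1^{m_{1,i}} ⋯ a_d^{m_{d,i}}⟩`,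
with `a_i = of (some i)` and `t = of none`. -/
def GMrels (d : ℕ) (M : Matrix (Fin d) (Fin d) ℤ) :
    Set (FreeGroup (Option (Fin d))) :=
  { r | (∃ i j : Fin d, r = ⁅FreeGroup.of (some i), FreeGroup.of (some j)⁆) ∨
        (∃ i : Fin d, r =
          FreeGroup.of none * FreeGroup.of (some i) * (FreeGroup.of none)⁻¹ *
            ((List.ofFn fun j : Fin d => FreeGroup.of (some j) ^ (M j i)).prod)⁻¹) }

/-- For a `d×d` integer matrix `M` of infinite multiplicative order with
`det M` coprime to `n ≥ 2`, the subgroup of the bijections of `ℤ_n^d`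
generated by the translations `α_i : u ↦ u + e_i` and `μ : u ↦ M·u` is
isomorphic to the ascending HNN extension `G_M`; moreover `⟨α_1,…,α_d⟩` is
free abelian of rank `d` and intersects `⟨μ⟩` trivially. -/
theorem stmt_15 (d n : ℕ) (hn : 2 ≤ n)
    (M : Matrix (Fin d) (Fin d) ℤ)
    (hord : ∀ k : ℕ, 1 ≤ k → M ^ k ≠ 1)
    (hcop : IsCoprime M.det (n : ℤ))
    (α : Fin d → Equiv.Perm (Fin d → nAdicInt n))
    (hα : ∀ i : Fin d, ⇑(α i) = fun u => u + Pi.single i (1 : nAdicInt n))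
    (μ : Equiv.Perm (Fin d → nAdicInt n))
    (hμ : ⇑μ = fun u => (M.map (fun x : ℤ => (x : nAdicInt n))).mulVec u) :
    Nonempty ((Subgroup.closure (Set.range α ∪ {μ})) ≃* PresentedGroup (GMrels d M)) ∧
    Nonempty ((Subgroup.closure (Set.range α)) ≃* Multiplicative (Fin d → ℤ)) ∧
    Subgroup.closure (Set.range α) ⊓ Subgroup.zpowers μ = ⊥ := by
  classical
  have hcomm : ∀ i j, Commute (α i) (α j) := hcommα α hα
  -- the target map on generators
  set f : Option (Fin d) → Equiv.Perm (Fin d → nAdicInt n) := fun o => o.elim μ α with hf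
  -- injectivity of the integer cast
  have castinj := nAdicInt_intCast_injective n hn
  have castv_eq_zero : ∀ v : Fin d → ℤ, (castv v : Fin d → nAdicInt n) = 0 → v = 0 := by
    intro v hv
    funext i
    have : ((v i : ℤ) : nAdicInt n) = ((0 : ℤ) : nAdicInt n) := by
      have := congrFun hv i
      simpa [castv] using this
    exact castinj this
  -- μ^k = 1 implies k = 0
  have mu_pow_eq_one : ∀ e : ℕ, μ ^ e = 1 → e = 0 := by
    intro e he
    by_contra h0
    have h1 : ((M.map (fun x : ℤ => (x : nAdicInt n))) ^ e).mulVec = ⇑(1 : Equiv.Perm (Fin d → nAdicInt n)) := by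
      rw [← mu_pow M μ hμ e, he]
    have hM : M ^ e = 1 := by
      ext i j
      have h2 : ((M.map (fun x : ℤ => (x : nAdicInt n))) ^ e).mulVec (Pi.single j 1) = Pi.single j 1 := by
        rw [h1]; rfl
      have h3 : ((M.map (fun x : ℤ => (x : nAdicInt n))) ^ e) i j = (1 : Matrix (Fin d) (Fin d) (nAdicInt n)) i j := by
        have := congrFun h2 i
        rw [Matrix.mulVec_single] at this
        simp only [Pi.smul_apply, MulOpposite.op_one, one_smul, Matrix.col_apply] at this
        rw [this, Matrix.one_apply, Pi.single_apply]

      have h4 : (M.map (fun x : ℤ => (x : nAdicInt n))) ^ e =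
          (M ^ e).map (fun x : ℤ => (x : nAdicInt n)) := by
        have := map_pow ((Int.castRingHom (nAdicInt n)).mapMatrix) M e
        simpa [RingHom.mapMatrix_apply] using this.symm
      rw [h4, Matrix.map_apply] at h3
      have h5 : (((M ^ e) i j : ℤ) : nAdicInt n) = (((1 : Matrix (Fin d) (Fin d) ℤ) i j : ℤ) : nAdicInt n) := by
        rw [h3, Matrix.one_apply, Matrix.one_apply]
        by_cases hij : i = j <;> simp [hij]
      exact castinj h5
    exact hord e (by omega) hM
  -- relations hold in the permutation group
  have prodPerm : ∀ i, (List.ofFn fun j : Fin d => α j ^ M j i).prod =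
      azZ α (hcommα α hα) (fun j => M j i) := fun i => (azZ_ofFn α hcomm _).symm
  have hrels : ∀ r ∈ GMrels d M, FreeGroup.lift f r = 1 := by
    rintro r (⟨i, j, rfl⟩ | ⟨i, rfl⟩)
    · rw [map_commutatorElement]
      simp only [FreeGroup.lift_apply_of, hf]
      exact commutatorElement_eq_one_iff_commute.mpr (hcommα α hα i j)
    · rw [map_mul, map_inv, map_mul, map_mul, map_inv, map_list_prod, List.map_ofFn]
      have hfn : (⇑(FreeGroup.lift f) ∘ fun j : Fin d => FreeGroup.of (some j) ^ M j i)
          = fun j : Fin d => α j ^ M j i := by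
        funext j
        simp only [Function.comp_apply, map_zpow, FreeGroup.lift_apply_of]
        rfl
      rw [hfn, prodPerm i]
      rw [FreeGroup.lift_apply_of, FreeGroup.lift_apply_of]
      show μ * α i * μ⁻¹ * (azZ α (hcommα α hα) fun j => M j i)⁻¹ = 1
      rw [← hrelPerm M α hα μ hμ i]
      group
  set Φ : PresentedGroup (GMrels d M) →* Equiv.Perm (Fin d → nAdicInt n) :=
    PresentedGroup.toGroup hrels with hΦ
  -- generators of the presented group
  set gP : Fin d → PresentedGroup (GMrels d M) := fun i => PresentedGroup.of (some i) with hgP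
  set tP : PresentedGroup (GMrels d M) := PresentedGroup.of none with htP
  have hmk : ∀ r ∈ GMrels d M, PresentedGroup.mk (GMrels d M) r = 1 := fun r hr =>
    (QuotientGroup.eq_one_iff _).mpr (Subgroup.subset_normalClosure hr)
  have hcommP : ∀ i j, Commute (gP i) (gP j) := by
    intro i j
    have := hmk _ (Or.inl ⟨i, j, rfl⟩)
    rw [map_commutatorElement] at this
    exact commutatorElement_eq_one_iff_commute.mp this
  have hrelP : ∀ i, tP * gP i * tP⁻¹ = azZ gP hcommP (fun j => M j i) := by
    intro i
    have := hmk _ (Or.inr ⟨i, rfl⟩)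
    rw [map_mul, map_inv, map_mul, map_mul, map_inv, map_list_prod, List.map_ofFn] at this
    have hfn : (⇑(PresentedGroup.mk (GMrels d M)) ∘ fun j : Fin d => FreeGroup.of (some j) ^ M j i)
        = fun j : Fin d => gP j ^ M j i := by
      funext j
      simp only [Function.comp_apply, map_zpow]
      rfl
    have h2 : (List.ofFn (⇑(PresentedGroup.mk (GMrels d M)) ∘ fun j : Fin d => FreeGroup.of (some j) ^ M j i)).prod
        = azZ gP hcommP (fun j => M j i) := by
      rw [hfn, azZ_ofFn gP hcommP]
    rw [h2] at this
    have h3 : (tP * gP i * tP⁻¹) * (azZ gP hcommP (fun j => M j i))⁻¹ = 1 := this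
    calc tP * gP i * tP⁻¹
        = (tP * gP i * tP⁻¹ * (azZ gP hcommP fun j => M j i)⁻¹) * azZ gP hcommP (fun j => M j i) := by
          group
      _ = azZ gP hcommP (fun j => M j i) := by rw [h3]; group
  have hΦg : ∀ i, Φ (gP i) = α i := fun i => PresentedGroup.toGroup.of hrels
  have hΦt : Φ tP = μ := PresentedGroup.toGroup.of hrels
  have hΦaz : ∀ v : Fin d → ℤ, Φ (azZ gP hcommP v) = azZ α (hcommα α hα) v := by
    intro v
    rw [azZ_ofFn gP hcommP, azZ_ofFn α (hcommα α hα), map_list_prod, List.map_ofFn]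
    have hfn : (⇑Φ ∘ fun j : Fin d => gP j ^ v j) = fun j : Fin d => α j ^ v j := by
      funext j
      simp only [Function.comp_apply, map_zpow, hΦg]
    rw [hfn]
  -- injectivity of Φ
  have hker : ∀ x : PresentedGroup (GMrels d M), Φ x = 1 → x = 1 := by
    intro x hx
    have hNF : x ∈ NF gP hcommP M tP hrelP := by
      refine PresentedGroup.generated_by _ _ (fun o => ?_) x
      cases o with
      | none => exact ⟨0, 1, 0, by simp [azZ_zero, htP]⟩
      | some i => exact ⟨0, 0, Pi.single i 1, by simp [azZ_single, hgP]⟩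
    obtain ⟨p, q, v, rfl⟩ := hNF
    rw [map_mul, map_mul, map_inv, map_pow, map_pow, hΦt, hΦaz] at hx
    rw [azPerm α hα] at hx
    -- evaluate at 0
    have h2 : Equiv.addRight (castv v : Fin d → nAdicInt n) * μ ^ q = μ ^ p := by
      calc Equiv.addRight (castv v : Fin d → nAdicInt n) * μ ^ q
          = μ ^ p * ((μ ^ p)⁻¹ * Equiv.addRight (castv v : Fin d → nAdicInt n) * μ ^ q) := by group
        _ = μ ^ p := by rw [hx]; group
    have h3 : (0 : Fin d → nAdicInt n) + castv v = 0 := by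
      have := DFunLike.congr_fun h2 (0 : Fin d → nAdicInt n)
      rw [Equiv.Perm.mul_apply, mu_pow_zero M μ hμ q, mu_pow_zero M μ hμ p] at this
      exact this
    have hv : v = 0 := castv_eq_zero v (by simpa using h3)
    subst hv
    have hc0 : (castv (0 : Fin d → ℤ) : Fin d → nAdicInt n) = 0 := by
      funext i; simp [castv]
    have haddr0 : Equiv.addRight (0 : Fin d → nAdicInt n) = 1 := by
      ext u; simp
    rw [hc0, haddr0, mul_one] at hx
    rw [azZ_zero gP hcommP, mul_one]
    -- now (μ^p)⁻¹ * μ^q = 1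
    have hpq : μ ^ q = μ ^ p := by
      calc μ ^ q = μ ^ p * ((μ ^ p)⁻¹ * μ ^ q) := by group
        _ = μ ^ p := by rw [hx]; group
    have : p = q := by
      rcases lt_trichotomy p q with h | h | h
      · exfalso
        obtain ⟨e, rfl⟩ : ∃ e, q = p + e := ⟨q - p, by omega⟩
        rw [pow_add] at hpq
        have : μ ^ e = 1 := by
          have h' : μ ^ p * μ ^ e = μ ^ p * 1 := by rw [mul_one]; exact hpq
          exact mul_left_cancel h'
        have := mu_pow_eq_one e this
        omega
      · exact h
      · exfalso
        obtain ⟨e, rfl⟩ : ∃ e, p = q + e := ⟨p - q, by omega⟩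
        rw [pow_add] at hpq
        have : μ ^ e = 1 := by
          have h' : μ ^ q * μ ^ e = μ ^ q * 1 := by rw [mul_one]; exact hpq.symm
          exact mul_left_cancel h'
        have := mu_pow_eq_one e this
        omega
    subst this
    group
  have hinj : Function.Injective Φ := (injective_iff_map_eq_one Φ).mpr hker
  -- range of Φ
  have hrangef : Set.range f = Set.range α ∪ {μ} := by
    ext x
    constructor
    · rintro ⟨o, rfl⟩
      cases o with
      | none => exact Or.inr rfl
      | some i => exact Or.inl ⟨i, rfl⟩
    · rintro (⟨i, rfl⟩ | h)
      · exact ⟨some i, rfl⟩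
      · exact ⟨none, h.symm ▸ rfl⟩
  have hrange : Φ.range = Subgroup.closure (Set.range α ∪ {μ}) := by
    have h1 : Φ.range = Subgroup.map Φ ⊤ := MonoidHom.range_eq_map Φ
    rw [← PresentedGroup.closure_range_of (GMrels d M), MonoidHom.map_closure] at h1
    have h2 : Φ '' Set.range (PresentedGroup.of (rels := GMrels d M)) = Set.range f := by
      rw [← Set.range_comp]
      have hco : (⇑Φ ∘ (PresentedGroup.of (rels := GMrels d M))) = f :=
        funext fun o => PresentedGroup.toGroup.of hrels
      rw [hco]
    rw [h1, h2, hrangef]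
  -- Part 1 equivalence
  have part1 : Nonempty ((Subgroup.closure (Set.range α ∪ {μ})) ≃* PresentedGroup (GMrels d M)) := by
    exact ⟨(MulEquiv.subgroupCongr hrange.symm).trans (MonoidHom.ofInjective hinj).symm⟩
  -- Part 2
  set ψ : (Fin d → Multiplicative ℤ) →* Equiv.Perm (Fin d → nAdicInt n) := azHom α (hcommα α hα) with hψ
  have hψaz : ∀ y : Fin d → Multiplicative ℤ,
      ψ y = azZ α (hcommα α hα) (fun i => Multiplicative.toAdd (y i)) := fun y => rfl
  have hψinj : Function.Injective ψ := by
    refine (injective_iff_map_eq_one ψ).mpr (fun y hy => ?_)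
    rw [hψaz, azPerm α hα] at hy
    have h0 : (0 : Fin d → nAdicInt n) + castv (fun i => Multiplicative.toAdd (y i)) = 0 := by
      have := DFunLike.congr_fun hy (0 : Fin d → nAdicInt n)
      exact this
    have := castv_eq_zero _ (by simpa using h0)
    funext i
    have hi := congrFun this i
    simpa using congrArg Multiplicative.ofAdd hi
  have hψrange : ψ.range = Subgroup.closure (Set.range α) := by
    apply le_antisymm
    · rintro x ⟨y, rfl⟩
      rw [hψaz, azZ_ofFn]
      refine Subgroup.list_prod_mem _ (fun g hg => ?_)
      rw [List.mem_ofFn] at hg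
      obtain ⟨j, rfl⟩ := hg
      exact Subgroup.zpow_mem _ (Subgroup.subset_closure (Set.mem_range_self j)) _
    · rw [Subgroup.closure_le]
      rintro x ⟨i, rfl⟩
      refine ⟨Pi.mulSingle i (Multiplicative.ofAdd (1 : ℤ)), ?_⟩
      rw [hψ, azHom, MonoidHom.noncommPiCoprod_mulSingle]
      simp
  have part2 : Nonempty ((Subgroup.closure (Set.range α)) ≃* Multiplicative (Fin d → ℤ)) := by
    exact ⟨((MulEquiv.subgroupCongr hψrange.symm).trans (MonoidHom.ofInjective hψinj).symm).trans
      (MulEquiv.piMultiplicative (fun _ : Fin d => ℤ)).symm⟩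
  -- Part 3
  have part3 : Subgroup.closure (Set.range α) ⊓ Subgroup.zpowers μ = ⊥ := by
    rw [eq_bot_iff]
    rintro x hx
    rw [Subgroup.mem_inf] at hx
    obtain ⟨hx1, hx2⟩ := hx
    rw [← hψrange] at hx1
    obtain ⟨y, rfl⟩ := hx1
    obtain ⟨k, hk⟩ := Subgroup.mem_zpowers_iff.mp hx2
    have hzero : (μ ^ k) 0 = 0 := by
      rcases Int.eq_nat_or_neg k with ⟨m, rfl | rfl⟩
      · rw [zpow_natCast]; exact mu_pow_zero M μ hμ m
      · rw [zpow_neg, zpow_natCast]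
        apply (μ ^ m).injective
        rw [← Equiv.Perm.mul_apply, mul_inv_cancel, Equiv.Perm.one_apply, mu_pow_zero M μ hμ m]
    have hx0 : ψ y 0 = 0 := by rw [← hk]; exact hzero
    rw [hψaz, azPerm α hα] at hx0
    have h0 : (0 : Fin d → nAdicInt n) + castv (fun i => Multiplicative.toAdd (y i)) = 0 := hx0
    have hcv : (castv (fun i => Multiplicative.toAdd (y i)) : Fin d → nAdicInt n) = 0 := by
      simpa using h0
    have : ψ y = 1 := by
      rw [hψaz, azPerm α hα, hcv]
      ext u; simp
    rw [this]
    exact Subgroup.one_mem ⊥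
  exact ⟨part1, part2, part3⟩
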